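/- Consider the process that repeatedly removes from a finite uncertain directed graph any vertex v with P[d⁻_v ≥ k] · P[d⁺_v ≥ l] < η (updating degree distributions after each removal) until no such vertex remains. The resulting vertex set is independent of the order in which violating vertices are removed. -/

import Mathlib

open Finset

/-- Edges of the subgraph induced by the vertex set `C`. -/
def inducedEdges {V : Type*} [DecidableEq V] (E : Finset (V × V)) (C : Finset V) :
    Finset (V × V) :=
  E.filter (fun e => e.1 ∈ C ∧ e.2 ∈ C)

/-- `P[d⁻_v ≥ k]` in the subgraph induced by the remaining vertex set `C`, where
each edge `e` exists independently with probability `p e`. -/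
def inProb {V : Type*} [DecidableEq V] (E : Finset (V × V)) (p : V × V → ℝ)
    (C : Finset V) (k : ℕ) (v : V) : ℝ :=
  ∑ W ∈ (inducedEdges E C).powerset.filter
      (fun W => k ≤ (W.filter (fun e => e.2 = v)).card),
    (∏ e ∈ W, p e) * ∏ e ∈ inducedEdges E C \ W, (1 - p e)

/-- `P[d⁺_v ≥ l]` in the subgraph induced by the remaining vertex set `C`. -/
def outProb {V : Type*} [DecidableEq V] (E : Finset (V × V)) (p : V × V → ℝ)
    (C : Finset V) (l : ℕ) (v : V) : ℝ :=
  ∑ W ∈ (inducedEdges E C).powerset.filter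
      (fun W => l ≤ (W.filter (fun e => e.1 = v)).card),
    (∏ e ∈ W, p e) * ∏ e ∈ inducedEdges E C \ W, (1 - p e)

/-- `v` is a violating vertex of the current vertex set `C`. -/
def Violating {V : Type*} [DecidableEq V] (E : Finset (V × V)) (p : V × V → ℝ)
    (k l : ℕ) (η : ℝ) (C : Finset V) (v : V) : Prop :=
  v ∈ C ∧ inProb E p C k v * outProb E p C l v < η

/-- One peeling step: remove a violating vertex. -/
def PeelStep {V : Type*} [DecidableEq V] (E : Finset (V × V)) (p : V × V → ℝ)
    (k l : ℕ) (η : ℝ) (C C' : Finset V) : Prop :=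
  ∃ v, Violating E p k l η C v ∧ C' = C.erase v

/-!
Both probabilities of a vertex are probabilities of increasing events (at least `k` incoming,
resp. `l` outgoing, edges present) under independent edge sampling, and such a probability can
only grow when edges are added. Hence a vertex violating the threshold in some vertex set still
violates it in every smaller set containing it. So a set `S` without violating vertices is never
touched by a peeling run starting above `S`: each terminal set of one run contains every terminal
set of any other run from the same start.
-/

section Bernoulli

lemma monotone_le_card_filter {α : Type*} (k : ℕ) (P : α → Prop) [DecidablePred P] :
    Monotone fun W : Finset α => k ≤ (W.filter P).card :=
  fun _ _ h hk => hk.trans (card_le_card (filter_subset_filter P h))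

variable {α : Type*} [DecidableEq α]

/-- The probability that the random subset of `F`, containing each `e` independently with
probability `p e`, satisfies `Q`. -/
def bernoulliProb (p : α → ℝ) (F : Finset α) (Q : Finset α → Prop) [DecidablePred Q] : ℝ :=
  ∑ W ∈ F.powerset.filter Q, (∏ e ∈ W, p e) * ∏ e ∈ F \ W, (1 - p e)

variable {p : α → ℝ}

lemma bernoulli_weight_nonneg (hp : ∀ e, 0 ≤ p e ∧ p e ≤ 1) (F W : Finset α) :
    0 ≤ (∏ e ∈ W, p e) * ∏ e ∈ F \ W, (1 - p e) :=
  mul_nonneg (prod_nonneg fun e _ => (hp e).1) (prod_nonneg fun e _ => sub_nonneg.2 (hp e).2)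

lemma bernoulliProb_nonneg (hp : ∀ e, 0 ≤ p e ∧ p e ≤ 1) (F : Finset α)
    (Q : Finset α → Prop) [DecidablePred Q] : 0 ≤ bernoulliProb p F Q :=
  sum_nonneg fun W _ => bernoulli_weight_nonneg hp F W

lemma bernoulliProb_le_of_imp (hp : ∀ e, 0 ≤ p e ∧ p e ≤ 1) (F : Finset α)
    {Q R : Finset α → Prop} [DecidablePred Q] [DecidablePred R] (h : ∀ W, Q W → R W) :
    bernoulliProb p F Q ≤ bernoulliProb p F R :=
  sum_le_sum_of_subset_of_nonneg (monotone_filter_right _ fun W _ => h W)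
    fun W _ _ => bernoulli_weight_nonneg hp F W

/-- Conditioning on whether `a` is present. -/
lemma bernoulliProb_insert {a : α} {F : Finset α} (ha : a ∉ F)
    (Q : Finset α → Prop) [DecidablePred Q] :
    bernoulliProb p (insert a F) Q
      = p a * bernoulliProb p F (fun W => Q (insert a W)) + (1 - p a) * bernoulliProb p F Q := by
  simp only [bernoulliProb, sum_filter, sum_powerset_insert ha, mul_sum]
  rw [add_comm]
  congr 1 <;> refine sum_congr rfl fun W hW => ?_ <;>
    have haW : a ∉ W := fun h => ha (mem_powerset.1 hW h)
  · rw [insert_sdiff_insert, sdiff_insert_of_notMem ha, prod_insert haW]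
    split_ifs <;> ring
  · rw [insert_sdiff_of_notMem _ haW, prod_insert (fun h => ha (mem_sdiff.1 h).1)]
    split_ifs <;> ring

lemma bernoulliProb_mono (hp : ∀ e, 0 ≤ p e ∧ p e ≤ 1) {Q : Finset α → Prop} [DecidablePred Q]
    (hQ : Monotone Q) {F G : Finset α} (hFG : F ⊆ G) :
    bernoulliProb p F Q ≤ bernoulliProb p G Q := by
  suffices ∀ D : Finset α, bernoulliProb p F Q ≤ bernoulliProb p (F ∪ D) Q by
    simpa [union_sdiff_of_subset hFG] using this (G \ F)
  intro D
  induction D using Finset.induction_on with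
  | empty => simp
  | insert a D _ ih =>
    rw [union_insert]
    by_cases ha : a ∈ F ∪ D
    · rwa [insert_eq_of_mem ha]
    have h_up : bernoulliProb p (F ∪ D) Q
        ≤ bernoulliProb p (F ∪ D) (fun W => Q (insert a W)) :=
      bernoulliProb_le_of_imp hp _ fun W => hQ (subset_insert a W)
    rw [bernoulliProb_insert ha]
    linarith [mul_le_mul_of_nonneg_left h_up (hp a).1]

end Bernoulli

section Peeling

variable {V : Type*} [DecidableEq V] {E : Finset (V × V)} {p : V × V → ℝ}

lemma inducedEdges_mono {C D : Finset V} (h : C ⊆ D) : inducedEdges E C ⊆ inducedEdges E D :=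
  monotone_filter_right _ fun _ _ he => ⟨h he.1, h he.2⟩

lemma inProb_mono (hp : ∀ e, 0 ≤ p e ∧ p e ≤ 1) {C D : Finset V} (h : C ⊆ D) (k : ℕ) (v : V) :
    inProb E p C k v ≤ inProb E p D k v :=
  bernoulliProb_mono hp (monotone_le_card_filter k _) (inducedEdges_mono h)

lemma outProb_mono (hp : ∀ e, 0 ≤ p e ∧ p e ≤ 1) {C D : Finset V} (h : C ⊆ D) (l : ℕ) (v : V) :
    outProb E p C l v ≤ outProb E p D l v :=
  bernoulliProb_mono hp (monotone_le_card_filter l _) (inducedEdges_mono h)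

lemma Violating.of_subset (hp : ∀ e, 0 ≤ p e ∧ p e ≤ 1) {k l : ℕ} {η : ℝ} {C D : Finset V}
    {v : V} (hv : Violating E p k l η D v) (hCD : C ⊆ D) (hvC : v ∈ C) :
    Violating E p k l η C v :=
  ⟨hvC, lt_of_le_of_lt (mul_le_mul (inProb_mono hp hCD k v) (outProb_mono hp hCD l v)
    (bernoulliProb_nonneg hp _ _) (bernoulliProb_nonneg hp _ _)) hv.2⟩

lemma subset_of_reflTransGen_peelStep {k l : ℕ} {η : ℝ} {C D : Finset V}
    (h : Relation.ReflTransGen (PeelStep E p k l η) C D) : D ⊆ C := by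
  induction h with
  | refl => exact Subset.rfl
  | tail _ hstep ih =>
    obtain ⟨v, -, rfl⟩ := hstep
    exact (erase_subset _ _).trans ih

lemma subset_of_reflTransGen_peelStep_of_stable (hp : ∀ e, 0 ≤ p e ∧ p e ≤ 1) {k l : ℕ}
    {η : ℝ} {S C D : Finset V} (hS : ∀ v, ¬ Violating E p k l η S v)
    (h : Relation.ReflTransGen (PeelStep E p k l η) C D) (hSC : S ⊆ C) : S ⊆ D := by
  induction h with
  | refl => exact hSC
  | tail _ hstep ih =>
    obtain ⟨v, hv, rfl⟩ := hstep
    exact fun x hx => mem_erase.2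
      ⟨by rintro rfl; exact hS x (hv.of_subset hp ih hx), ih hx⟩

end Peeling

theorem stmt19 {V : Type*} [DecidableEq V] (E : Finset (V × V)) (p : V × V → ℝ)
    (hp : ∀ e, 0 ≤ p e ∧ p e ≤ 1) (k l : ℕ) (η : ℝ)
    (C₀ C₁ C₂ : Finset V)
    (h₁ : Relation.ReflTransGen (PeelStep E p k l η) C₀ C₁)
    (h₂ : Relation.ReflTransGen (PeelStep E p k l η) C₀ C₂)
    (t₁ : ∀ v, ¬ Violating E p k l η C₁ v)
    (t₂ : ∀ v, ¬ Violating E p k l η C₂ v) :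
    C₁ = C₂ :=
  Subset.antisymm
    (subset_of_reflTransGen_peelStep_of_stable hp t₁ h₂ (subset_of_reflTransGen_peelStep h₁))
    (subset_of_reflTransGen_peelStep_of_stable hp t₂ h₁ (subset_of_reflTransGen_peelStep h₂))
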